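/- For all positive integers m and k, N_{mk}(q, N₁) = N_m(q^k, N_k(q, N₁)), where N_k(q, t) is the bivariate polynomial defined by N_k = 1 + q^k − α₁^k − α₂^k with α₁+α₂ = 1+q−t and α₁α₂ = q. -/

import Mathlib

/-- Power sums `s k = α₁^k + α₂^k` of the roots of `X² - (1+q-t)X + q`, as elements of
`ℤ[q, t]` (with `q = X 0`, `t = X 1`), via Newton's recurrence. -/
noncomputable def powerSumQT : ℕ → MvPolynomial (Fin 2) ℤ
  | 0 => 2
  | 1 => 1 + MvPolynomial.X 0 - MvPolynomial.X 1
  | k + 2 =>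
      (1 + MvPolynomial.X 0 - MvPolynomial.X 1) * powerSumQT (k + 1)
        - MvPolynomial.X 0 * powerSumQT k

/-- `N_k(q,t) = 1 + q^k - α₁^k - α₂^k ∈ ℤ[q,t]`. -/
noncomputable def NkQT (k : ℕ) : MvPolynomial (Fin 2) ℤ :=
  1 + (MvPolynomial.X 0) ^ k - powerSumQT k

/-!
Realise `α₁, α₂` as the eigenvalues of a `2 × 2` matrix `A` with `det A = q` and
`tr A = 1 + q - t`, i.e. `t = 1 + det A - tr A`. Then `s_k = tr (A^k)` and `N_k = 1 + det A^k - tr A^k`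
for every such matrix over any commutative ring. Applying this to `A^k`, whose determinant is `q^k`
and whose parameter `1 + det - tr` is `N_k`, gives `N_{mk} = N_m(q^k, N_k)` because `(A^k)^m = A^(mk)`.
-/

open MvPolynomial Matrix

variable {R : Type*} [CommRing R]

def qtParams (A : Matrix (Fin 2) (Fin 2) R) : Fin 2 → R :=
  ![A.det, 1 + A.det - A.trace]

lemma Matrix.sq_fin_two_eq (A : Matrix (Fin 2) (Fin 2) R) :
    A ^ 2 = A.trace • A - A.det • (1 : Matrix (Fin 2) (Fin 2) R) := by
  ext i j
  fin_cases i <;> fin_cases j <;>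
    simp [sq, mul_apply, trace_fin_two, det_fin_two] <;> ring

lemma Matrix.pow_add_two_fin_two (A : Matrix (Fin 2) (Fin 2) R) (n : ℕ) :
    A ^ (n + 2) = A.trace • A ^ (n + 1) - A.det • A ^ n := by
  rw [pow_add, sq_fin_two_eq, Matrix.mul_sub, mul_smul_comm, mul_smul_comm, Matrix.mul_one,
    ← pow_succ]

lemma aeval_qtParams_powerSumQT (A : Matrix (Fin 2) (Fin 2) R) (n : ℕ) :
    aeval (qtParams A) (powerSumQT n) = (A ^ n).trace := by
  induction n using Nat.twoStepInduction with
  | zero => simp [powerSumQT, qtParams, trace_one]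
  | one => simp [powerSumQT, qtParams]
  | more n ih₀ ih₁ =>
    rw [powerSumQT, A.pow_add_two_fin_two, trace_sub, trace_smul, trace_smul, ← ih₀, ← ih₁]
    simp [qtParams]

lemma aeval_qtParams_NkQT (A : Matrix (Fin 2) (Fin 2) R) (n : ℕ) :
    aeval (qtParams A) (NkQT n) = 1 + A.det ^ n - (A ^ n).trace := by
  rw [NkQT, map_sub, map_add, map_one, map_pow, aeval_qtParams_powerSumQT]
  simp [qtParams]

lemma qtParams_pow (A : Matrix (Fin 2) (Fin 2) R) (k : ℕ) :
    qtParams (A ^ k) = ![A.det ^ k, aeval (qtParams A) (NkQT k)] := by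
  rw [aeval_qtParams_NkQT, qtParams, det_pow]

noncomputable def genericQTMatrix : Matrix (Fin 2) (Fin 2) (MvPolynomial (Fin 2) ℤ) :=
  !![1 + X 0 - X 1, -X 0; 1, 0]

lemma qtParams_genericQTMatrix : qtParams genericQTMatrix = X := by
  funext i
  fin_cases i <;> simp [qtParams, genericQTMatrix, det_fin_two, trace_fin_two]

theorem Nk_composition_general (m k : ℕ) :
    NkQT (m * k) = MvPolynomial.aeval ![(MvPolynomial.X 0 : MvPolynomial (Fin 2) ℤ) ^ k, NkQT k] (NkQT m) := by
  set A := genericQTMatrix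
  have hX : ∀ p, aeval (qtParams A) p = p := by
    intro p
    rw [qtParams_genericQTMatrix, aeval_X_left_apply]
  have hdet : A.det = X 0 := by
    simpa [qtParams] using congr_fun qtParams_genericQTMatrix 0
  calc NkQT (m * k) = 1 + A.det ^ (m * k) - (A ^ (m * k)).trace := by
        rw [← aeval_qtParams_NkQT]
        -- not `rw [hX]`: the `Algebra ℤ` instances here (`algebraInt` and the one of
        -- `MvPolynomial`) agree only up to unfolding
        exact (hX _).symm
    _ = 1 + (A ^ k).det ^ m - ((A ^ k) ^ m).trace := by
        rw [det_pow, ← pow_mul, ← pow_mul, mul_comm]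
    _ = aeval ![X 0 ^ k, NkQT k] (NkQT m) := by
        rw [← aeval_qtParams_NkQT, qtParams_pow, hdet]
        congr
        exact hX _

theorem Nk_composition (m k : ℕ) (hm : 1 ≤ m) (hk : 1 ≤ k) :
    NkQT (m * k) = MvPolynomial.aeval ![(MvPolynomial.X 0 : MvPolynomial (Fin 2) ℤ) ^ k, NkQT k] (NkQT m) :=
  Nk_composition_general m k
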